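/- Suppose K = F₂ and S is a nice basis of X. Let χ, ψ ∈ F₂ and let α and β be distinct elements of X*. Then there exists x ∈ X such that (Q_S + α)(x) = ψ, (Q_S + β)(x) = χ, and ω(x) ∉ {α, β}. -/
import Mathlib


/-- A basis `S` (with quadratic form `Q = Q_S`) is *nice* if for every
`χ ∈ 𝔽₂` and all `α, β ∈ X*` there is an `x ∈ X` with
`(Q_S + α)(x) = (Q_S + β)(x) = χ` and `ω(x) ∉ {α, β}`. -/
def IsNice {X : Type*} [AddCommGroup X] [Module (ZMod 2) X]
    (ω : X →ₗ[ZMod 2] X →ₗ[ZMod 2] ZMod 2) (S : Set X) : Prop :=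
  ∀ Q : X → ZMod 2, (∀ s ∈ S, Q s = 1) →
    (∀ x y, Q (x + y) + Q x + Q y = ω x y) →
    ∀ χ : ZMod 2, ∀ α β : Module.Dual (ZMod 2) X,
      ∃ x, Q x + α x = χ ∧ Q x + β x = χ ∧ ω x ≠ α ∧ ω x ≠ β

/-- over `K = 𝔽₂`, if `S` is a nice basis of `X`, then for any
`χ, ψ ∈ 𝔽₂` and distinct `α, β ∈ X*` there is an `x ∈ X` with
`(Q_S + α)(x) = ψ`, `(Q_S + β)(x) = χ` and `ω(x) ∉ {α, β}`. -/
theorem stmt14 {X : Type*} [AddCommGroup X] [Module (ZMod 2) X]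
    [FiniteDimensional (ZMod 2) X]
    (ω : X →ₗ[ZMod 2] X →ₗ[ZMod 2] ZMod 2) (halt : ∀ x, ω x x = 0)
    (S : Set X) (hind : LinearIndependent (ZMod 2) ((↑) : S → X))
    (hspan : Submodule.span (ZMod 2) S = ⊤)
    (hnice : IsNice ω S)
    (Q : X → ZMod 2) (hQS : ∀ s ∈ S, Q s = 1)
    (hQpol : ∀ x y, Q (x + y) + Q x + Q y = ω x y)
    (χ ψ : ZMod 2) (α β : Module.Dual (ZMod 2) X) (hαβ : α ≠ β) :
    ∃ x, Q x + α x = ψ ∧ Q x + β x = χ ∧ ω x ≠ α ∧ ω x ≠ β := by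
  have key : ∀ a b : ZMod 2, a + b = 0 → a = b := by decide
  have hsym : ∀ x y, ω x y = ω y x := by
    intro x y
    have h := halt (x + y)
    simp only [map_add, LinearMap.add_apply, halt x, halt y, zero_add, add_zero] at h
    exact (key _ _ h).symm
  by_cases hψχ : ψ = χ
  · subst hψχ; exact hnice Q hQS hQpol ψ α β
  · have hχ : χ = ψ + 1 := by
      have : ∀ p c : ZMod 2, p ≠ c → c = p + 1 := by decide
      exact this ψ χ hψχ
    have hne : α - β ≠ 0 := sub_ne_zero.mpr hαβ
    obtain ⟨y, hy⟩ : ∃ y, α y + β y = 1 := by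
      by_contra h
      push_neg at h
      apply hne
      ext w
      have h2 : ∀ a b : ZMod 2, a + b ≠ 1 → a - b = 0 := by decide
      simpa using h2 _ _ (h w)
    obtain ⟨z, h1, h2, h3, h4⟩ := hnice Q hQS hQpol (ψ + Q y + α y) (α + ω y) (β + ω y)
    simp only [LinearMap.add_apply] at h1 h2
    have hq := hQpol z y
    rw [hsym z y] at hq
    refine ⟨z + y, ?_, ?_, ?_, ?_⟩
    · rw [map_add]
      have arith1 : ∀ a qz qy w az ay p : ZMod 2,
          a + qz + qy = w → qz + (az + w) = p + qy + ay → a + (az + ay) = p := by decide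
      exact arith1 _ _ _ _ _ _ _ hq h1
    · rw [map_add, hχ]
      have arith2 : ∀ a qz qy w bz ay bb p : ZMod 2,
          a + qz + qy = w → qz + (bz + w) = p + qy + ay → ay + bb = 1 →
          a + (bz + bb) = p + 1 := by decide
      exact arith2 _ _ _ _ _ _ _ _ hq h2 hy
    · intro h
      apply h3
      ext w
      have hw := DFunLike.congr_fun h w
      simp only [map_add, LinearMap.add_apply] at hw ⊢
      have arith3 : ∀ a b c : ZMod 2, a + b = c → a = c + b := by decide
      exact arith3 _ _ _ hw
    · intro h
      apply h4
      ext w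
      have hw := DFunLike.congr_fun h w
      simp only [map_add, LinearMap.add_apply] at hw ⊢
      have arith3 : ∀ a b c : ZMod 2, a + b = c → a = c + b := by decide
      exact arith3 _ _ _ hw
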